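/- If C(A) = (A + UAU*)/2 is a pinching of a square matrix A (U unitary), then δ(C(A)) ≺_w δ(A), and likewise for the anti-pinching L(A) = A − C(A) = (A − UAU*)/2 one has δ(L(A)) ≺_w δ(A). -/

import Mathlib

open scoped InnerProductSpace ComplexOrder Matrix

/-- Singular values of a square complex matrix (in some fixed order). -/
noncomputable def singVals {n : ℕ} (A : Matrix (Fin n) (Fin n) ℂ) : Fin n → ℝ :=
  fun i => Real.sqrt ((Matrix.posSemidef_conjTranspose_mul_self A).1.eigenvalues i)

/-- Sum of the `k` largest entries of a vector: supremum of sums over subsets of size `k`. -/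
noncomputable def sumK {n : ℕ} (f : Fin n → ℝ) (k : ℕ) : ℝ :=
  sSup {x | ∃ s : Finset (Fin n), s.card = k ∧ x = ∑ i ∈ s, f i}

/-- The Ky-Fan `k`-norm: sum of the `k` largest singular values. -/
noncomputable def kyFan {n : ℕ} (A : Matrix (Fin n) (Fin n) ℂ) (k : ℕ) : ℝ :=
  sumK (singVals A) k

/-- The `k`-th discrepancy norm, via its minimal characterization. -/
noncomputable def discNorm {n : ℕ} (A : Matrix (Fin n) (Fin n) ℂ) (k : ℕ) : ℝ :=
  sInf {x | ∃ α : ℂ, x = kyFan (A - α • 1) k}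

/-- The vector of discrepancy values. -/
noncomputable def discVals {n : ℕ} (A : Matrix (Fin n) (Fin n) ℂ) : Fin n → ℝ :=
  fun i => discNorm A (i.1 + 1) - discNorm A i.1

/-- Weak majorization of vectors. -/
def WeakMaj {n : ℕ} (f g : Fin n → ℝ) : Prop :=
  ∀ k : ℕ, sumK f k ≤ sumK g k

/-- Decreasing rearrangement of a vector. -/
noncomputable def sortDesc {n : ℕ} (f : Fin n → ℝ) : Fin n → ℝ :=
  fun i => f (Tuple.sort f i.rev)

/-!
Ky Fan's principle, in the form `‖M‖_(k) = max ∑ᵢ 2 Re ⟪xᵢ, M yᵢ⟫` over `k` pairs `(xᵢ, yᵢ)`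
orthonormal in `ℂⁿ ⊕₂ ℂⁿ` (the maximum is attained at `(uⱼ, vⱼ)/√2` for the singular pairs),
makes every `‖·‖_(k)` subadditive and invariant under `X ↦ V X W` for unitaries `V`, `W`. Hence
`‖(X + V X W)/2‖_(k) ≤ ‖X‖_(k)`. Since `C(A) - α = C(A - α)` and `L(A) = L(A - α)` with
`L(X) = (X + (-U) X U*)/2`, minimizing over `α` gives `Σ_{i<k} δᵢ(C(A)) ≤ Σ_{i<k} δᵢ(A)` and the
same for `L(A)`. Finally, the discrepancy norms are concave in `k` (infima of the concave
functions `k ↦ ‖A - α‖_(k)`) and vanish at `k = 0`, so `δ(A)` is decreasing and the sum of its `k`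
largest entries is the `k`-th discrepancy norm.
-/

section sumK

variable {n : ℕ}

lemma finite_setOf_sum_card_eq (f : Fin n → ℝ) (k : ℕ) :
    {x | ∃ s : Finset (Fin n), s.card = k ∧ x = ∑ i ∈ s, f i}.Finite :=
  (Set.finite_range fun s : Finset (Fin n) => ∑ i ∈ s, f i).subset <| by
    rintro x ⟨s, -, rfl⟩
    exact ⟨s, rfl⟩

lemma sum_le_sumK (f : Fin n → ℝ) {s : Finset (Fin n)} {k : ℕ} (hs : s.card = k) :
    ∑ i ∈ s, f i ≤ sumK f k :=
  le_csSup (finite_setOf_sum_card_eq f k).bddAbove ⟨s, hs, rfl⟩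

lemma exists_card_eq_sumK_eq_sum (f : Fin n → ℝ) {k : ℕ} (hk : k ≤ n) :
    ∃ s : Finset (Fin n), s.card = k ∧ sumK f k = ∑ i ∈ s, f i := by
  obtain ⟨s, -, hs⟩ := Finset.exists_subset_card_eq (s := (Finset.univ : Finset (Fin n)))
    (by simpa using hk)
  have hne : {x | ∃ s : Finset (Fin n), s.card = k ∧ x = ∑ i ∈ s, f i}.Nonempty := ⟨_, s, hs, rfl⟩
  exact hne.csSup_mem (finite_setOf_sum_card_eq f k)

lemma sumK_of_lt (f : Fin n → ℝ) {k : ℕ} (hk : n < k) : sumK f k = 0 := by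
  have : {x | ∃ s : Finset (Fin n), s.card = k ∧ x = ∑ i ∈ s, f i} = ∅ := by
    refine Set.eq_empty_of_forall_notMem fun x ⟨s, hs, _⟩ => ?_
    have := s.card_le_univ
    simp only [Fintype.card_fin] at this
    omega
  rw [sumK, this, Real.sSup_empty]

lemma sumK_zero (f : Fin n → ℝ) : sumK f 0 = 0 := by
  obtain ⟨s, hs, h⟩ := exists_card_eq_sumK_eq_sum f n.zero_le
  rw [h, Finset.card_eq_zero.1 hs, Finset.sum_empty]

lemma sumK_nonneg {f : Fin n → ℝ} (hf : ∀ i, 0 ≤ f i) (k : ℕ) : 0 ≤ sumK f k := by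
  rcases le_or_gt k n with hk | hk
  · obtain ⟨s, -, h⟩ := exists_card_eq_sumK_eq_sum f hk
    exact h ▸ Finset.sum_nonneg fun i _ => hf i
  · exact (sumK_of_lt f hk).ge

lemma sumK_add_sumK_le (f : Fin n → ℝ) {k : ℕ} (hk : k + 2 ≤ n) :
    sumK f (k + 2) + sumK f k ≤ 2 * sumK f (k + 1) := by
  obtain ⟨s, hs, hs_sum⟩ := exists_card_eq_sumK_eq_sum f hk
  obtain ⟨t, ht, ht_sum⟩ := exists_card_eq_sumK_eq_sum f (show k ≤ n by omega)
  -- Split `s ∪ t` into two sets of size `k + 1`, one of them containing `s ∩ t`.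
  have h_inter : (s ∩ t).card ≤ k + 1 := (Finset.card_le_card Finset.inter_subset_right).trans
    (by omega)
  have h_union : k + 1 ≤ (s ∪ t).card := by
    have := Finset.card_le_card (Finset.subset_union_left (s₁ := s) (s₂ := t)); omega
  obtain ⟨u, hiu, hus, hu⟩ := Finset.exists_subsuperset_card_eq
    (Finset.inter_subset_left.trans Finset.subset_union_left) h_inter h_union
  have hdisj : Disjoint ((s ∪ t) \ u) (s ∩ t) :=
    Finset.disjoint_left.2 fun a ha hb => (Finset.mem_sdiff.1 ha).2 (hiu hb)
  have hw : ((s ∪ t) \ u ∪ s ∩ t).card = k + 1 := by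
    have := Finset.card_union_add_card_inter s t
    rw [Finset.card_union_of_disjoint hdisj, Finset.card_sdiff_of_subset hus]
    omega
  have hsum : ∑ i ∈ s, f i + ∑ i ∈ t, f i = ∑ i ∈ u, f i + ∑ i ∈ (s ∪ t) \ u ∪ s ∩ t, f i := by
    rw [Finset.sum_union hdisj, ← Finset.sum_union_inter, ← add_assoc, add_comm (∑ i ∈ u, f i),
      Finset.sum_sdiff hus]
  linarith [sum_le_sumK f hu, sum_le_sumK f hw]

lemma le_of_sumK_eq_sum (f : Fin n → ℝ) {s : Finset (Fin n)}
    (hs : sumK f s.card = ∑ i ∈ s, f i) {a b : Fin n} (ha : a ∉ s) (hb : b ∈ s) : f a ≤ f b := by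
  have hcard : (insert a (s.erase b)).card = s.card := by
    rw [Finset.card_insert_of_notMem fun h => ha (Finset.mem_of_mem_erase h),
      Finset.card_erase_add_one hb]
  have := sum_le_sumK f hcard
  rw [Finset.sum_insert fun h => ha (Finset.mem_of_mem_erase h), hs,
    ← Finset.add_sum_erase s f hb] at this
  linarith

lemma sum_mul_le_sumK {f d : Fin n → ℝ} (hf : ∀ j, 0 ≤ f j) (hd₀ : ∀ j, 0 ≤ d j)
    (hd₁ : ∀ j, d j ≤ 1) {k : ℕ} (hdk : ∑ j, d j ≤ k) (hk : k ≤ n) :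
    ∑ j, f j * d j ≤ sumK f k := by
  obtain ⟨s, rfl, hs⟩ := exists_card_eq_sumK_eq_sum f hk
  rcases s.eq_empty_or_nonempty with rfl | hne
  · have hd : ∀ j, d j = 0 := fun j => (Finset.sum_eq_zero_iff_of_nonneg fun j _ => hd₀ j).1
      (le_antisymm (by simpa using hdk) (Finset.sum_nonneg fun j _ => hd₀ j)) j (Finset.mem_univ j)
    simp [hd, sumK_zero]
  -- `m` separates the values of `f` on `s` from those off `s`.
  set m := s.inf' hne f
  have hm₀ : 0 ≤ m := Finset.le_inf' hne _ fun j _ => hf j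
  have hpoint : ∀ j, f j * d j ≤ m * d j + if j ∈ s then f j - m else 0 := by
    intro j
    split_ifs with hj
    · nlinarith [Finset.inf'_le f hj, hd₁ j]
    · nlinarith [Finset.le_inf' hne f fun b hb => le_of_sumK_eq_sum f hs hj hb, hd₀ j]
  calc ∑ j, f j * d j ≤ ∑ j, (m * d j + if j ∈ s then f j - m else 0) :=
        Finset.sum_le_sum fun j _ => hpoint j
    _ = m * ∑ j, d j + (∑ j ∈ s, f j - s.card * m) := by
        rw [Finset.sum_add_distrib, Finset.mul_sum, Finset.sum_ite_mem, Finset.univ_inter,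
          Finset.sum_sub_distrib, Finset.sum_const, nsmul_eq_mul]
    _ ≤ sumK f s.card := by rw [hs]; nlinarith

end sumK

section discNorm

variable {n : ℕ}

lemma singVals_nonneg (A : Matrix (Fin n) (Fin n) ℂ) (i : Fin n) : 0 ≤ singVals A i :=
  Real.sqrt_nonneg _

lemma bddBelow_setOf_kyFan (A : Matrix (Fin n) (Fin n) ℂ) (k : ℕ) :
    BddBelow {x | ∃ α : ℂ, x = kyFan (A - α • 1) k} :=
  ⟨0, by rintro x ⟨α, rfl⟩; exact sumK_nonneg (singVals_nonneg _) k⟩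

lemma discNorm_le_kyFan (A : Matrix (Fin n) (Fin n) ℂ) (α : ℂ) (k : ℕ) :
    discNorm A k ≤ kyFan (A - α • 1) k :=
  csInf_le (bddBelow_setOf_kyFan A k) ⟨α, rfl⟩

lemma le_discNorm {A : Matrix (Fin n) (Fin n) ℂ} {k : ℕ} {c : ℝ}
    (h : ∀ α : ℂ, c ≤ kyFan (A - α • 1) k) : c ≤ discNorm A k :=
  le_csInf ⟨_, 0, rfl⟩ <| by rintro x ⟨α, rfl⟩; exact h α

lemma discNorm_zero (A : Matrix (Fin n) (Fin n) ℂ) : discNorm A 0 = 0 :=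
  le_antisymm (by simpa [kyFan, sumK_zero] using discNorm_le_kyFan A 0 0)
    (le_discNorm fun _ => (sumK_zero _).ge)

lemma discNorm_le_of_forall_exists_kyFan_le {A B : Matrix (Fin n) (Fin n) ℂ} {k : ℕ}
    (h : ∀ α : ℂ, ∃ β : ℂ, kyFan (B - β • 1) k ≤ kyFan (A - α • 1) k) :
    discNorm B k ≤ discNorm A k :=
  le_discNorm fun α => (h α).elim fun β hβ => (discNorm_le_kyFan B β k).trans hβ

lemma discNorm_add_discNorm_le (A : Matrix (Fin n) (Fin n) ℂ) {k : ℕ} (hk : k + 2 ≤ n) :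
    discNorm A (k + 2) + discNorm A k ≤ 2 * discNorm A (k + 1) := by
  suffices (discNorm A (k + 2) + discNorm A k) / 2 ≤ discNorm A (k + 1) by linarith
  refine le_discNorm fun α => ?_
  have hconc : kyFan (A - α • 1) (k + 2) + kyFan (A - α • 1) k ≤ 2 * kyFan (A - α • 1) (k + 1) :=
    sumK_add_sumK_le _ hk
  linarith [discNorm_le_kyFan A α (k + 2), discNorm_le_kyFan A α k]

lemma discNorm_succ_sub_le (A : Matrix (Fin n) (Fin n) ℂ) {i j : ℕ} (hij : i ≤ j)
    (hj : j < n) : discNorm A (j + 1) - discNorm A j ≤ discNorm A (i + 1) - discNorm A i := by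
  induction j, hij using Nat.le_induction with
  | base => exact le_rfl
  | succ j hij ih =>
    linarith [ih (by omega), discNorm_add_discNorm_le A (k := j) (by omega)]

lemma sum_discVals_le_discNorm (A : Matrix (Fin n) (Fin n) ℂ) (s : Finset (Fin n)) :
    ∑ i ∈ s, discVals A i ≤ discNorm A s.card := by
  induction s using Finset.induction_on_max with
  | empty => simp [discNorm_zero]
  | insert a s hlt ih =>
    have ha : a ∉ s := fun h => lt_irrefl a (hlt a h)
    have hcard : s.card ≤ a := by
      simpa using Finset.card_le_card
        (show s ⊆ Finset.Iio a from fun i hi => Finset.mem_Iio.2 (hlt i hi))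
    rw [Finset.sum_insert ha, Finset.card_insert_of_notMem ha]
    have hda : discVals A a ≤ discNorm A (s.card + 1) - discNorm A s.card :=
      discNorm_succ_sub_le A hcard a.2
    linarith

lemma sumK_discVals (A : Matrix (Fin n) (Fin n) ℂ) {k : ℕ} (hk : k ≤ n) :
    sumK (discVals A) k = discNorm A k := by
  refine le_antisymm ?_ ?_
  · obtain ⟨s, rfl, hs⟩ := exists_card_eq_sumK_eq_sum (discVals A) hk
    exact hs ▸ sum_discVals_le_discNorm A s
  · let s := Finset.univ.map (Fin.castLEOrderEmb hk).toEmbedding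
    have hs : ∑ i ∈ s, discVals A i = discNorm A k := by
      rw [Finset.sum_map]
      change ∑ i : Fin k, (discNorm A (i + 1) - discNorm A i) = _
      rw [Fin.sum_univ_eq_sum_range (fun i => discNorm A (i + 1) - discNorm A i),
        Finset.sum_range_sub (discNorm A), discNorm_zero, sub_zero]
    exact hs ▸ sum_le_sumK _ (by simp [s])

lemma weakMaj_discVals_of_discNorm_le {A B : Matrix (Fin n) (Fin n) ℂ}
    (h : ∀ k, discNorm B k ≤ discNorm A k) : WeakMaj (discVals B) (discVals A) := by
  intro k
  rcases le_or_gt k n with hk | hk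
  · rw [sumK_discVals B hk, sumK_discVals A hk]
    exact h k
  · rw [sumK_of_lt _ hk, sumK_of_lt _ hk]

end discNorm

section KyFan

open WithLp

variable {n : ℕ}

lemma inner_toEuclideanLin_toEuclideanLin (A : Matrix (Fin n) (Fin n) ℂ)
    (x y : EuclideanSpace ℂ (Fin n)) :
    ⟪A.toEuclideanLin x, A.toEuclideanLin y⟫_ℂ = ⟪x, (Aᴴ * A).toEuclideanLin y⟫_ℂ := by
  rw [Matrix.toLpLin_mul_same, LinearMap.comp_apply, Matrix.toEuclideanLin_conjTranspose_eq_adjoint,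
    LinearMap.adjoint_inner_right]

lemma inner_toEuclideanLin_of_mem_unitaryGroup {V : Matrix (Fin n) (Fin n) ℂ}
    (hV : V ∈ Matrix.unitaryGroup (Fin n) ℂ) (x y : EuclideanSpace ℂ (Fin n)) :
    ⟪V.toEuclideanLin x, V.toEuclideanLin y⟫_ℂ = ⟪x, y⟫_ℂ := by
  rw [inner_toEuclideanLin_toEuclideanLin, ← Matrix.star_eq_conjTranspose,
    Matrix.mem_unitaryGroup_iff'.1 hV, Matrix.toLpLin_one, LinearMap.id_apply]

lemma kyFan_of_lt (A : Matrix (Fin n) (Fin n) ℂ) {k : ℕ} (hk : n < k) : kyFan A k = 0 :=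
  sumK_of_lt _ hk

noncomputable def rightSingVec (A : Matrix (Fin n) (Fin n) ℂ) :
    OrthonormalBasis (Fin n) ℂ (EuclideanSpace ℂ (Fin n)) :=
  (Matrix.posSemidef_conjTranspose_mul_self A).1.eigenvectorBasis

/-- Junk value `0` when `singVals A j = 0`. -/
noncomputable def leftSingVec (A : Matrix (Fin n) (Fin n) ℂ) (j : Fin n) :
    EuclideanSpace ℂ (Fin n) :=
  ((singVals A j)⁻¹ : ℂ) • A.toEuclideanLin (rightSingVec A j)

lemma toEuclideanLin_conjTranspose_mul_self_rightSingVec (A : Matrix (Fin n) (Fin n) ℂ)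
    (j : Fin n) :
    (Aᴴ * A).toEuclideanLin (rightSingVec A j) =
      ((singVals A j ^ 2 : ℝ) : ℂ) • rightSingVec A j := by
  have hA := Matrix.posSemidef_conjTranspose_mul_self A
  rw [singVals, Real.sq_sqrt (hA.eigenvalues_nonneg j), Matrix.toLpLin_apply, rightSingVec,
    hA.1.mulVec_eigenvectorBasis]
  ext i
  simp [Complex.real_smul]

lemma inner_toEuclideanLin_rightSingVec (A : Matrix (Fin n) (Fin n) ℂ) (i j : Fin n) :
    ⟪A.toEuclideanLin (rightSingVec A i), A.toEuclideanLin (rightSingVec A j)⟫_ℂ =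
      if i = j then ((singVals A j ^ 2 : ℝ) : ℂ) else 0 := by
  rw [inner_toEuclideanLin_toEuclideanLin, toEuclideanLin_conjTranspose_mul_self_rightSingVec,
    inner_smul_right, (rightSingVec A).inner_eq_ite]
  split_ifs <;> simp

lemma toEuclideanLin_rightSingVec (A : Matrix (Fin n) (Fin n) ℂ) (j : Fin n) :
    A.toEuclideanLin (rightSingVec A j) = (singVals A j : ℂ) • leftSingVec A j := by
  rcases eq_or_ne (singVals A j) 0 with h | h
  · have h0 : A.toEuclideanLin (rightSingVec A j) = 0 := by
      simpa [h] using inner_toEuclideanLin_rightSingVec A j j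
    simp [h0, h]
  · rw [leftSingVec, smul_smul, mul_inv_cancel₀ (Complex.ofReal_ne_zero.2 h), one_smul]

lemma inner_leftSingVec (A : Matrix (Fin n) (Fin n) ℂ) (i j : Fin n) :
    ⟪leftSingVec A i, leftSingVec A j⟫_ℂ = if i = j ∧ singVals A i ≠ 0 then 1 else 0 := by
  rw [leftSingVec, leftSingVec, inner_smul_left, inner_smul_right,
    inner_toEuclideanLin_rightSingVec]
  by_cases hij : i = j
  · subst hij
    by_cases h : singVals A i = 0
    · simp [h]
    · simp only [true_and, if_true, ne_eq, h, not_false_eq_true, map_inv₀, Complex.conj_ofReal]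
      push_cast
      field_simp
  · simp [hij]

lemma inner_toEuclideanLin_eq_sum (A : Matrix (Fin n) (Fin n) ℂ) (x y : EuclideanSpace ℂ (Fin n)) :
    ⟪x, A.toEuclideanLin y⟫_ℂ =
      ∑ j, (singVals A j : ℂ) * (⟪x, leftSingVec A j⟫_ℂ * ⟪rightSingVec A j, y⟫_ℂ) := by
  conv_lhs => rw [← (rightSingVec A).sum_repr' y]
  simp only [map_sum, map_smul, inner_sum, inner_smul_right, toEuclideanLin_rightSingVec]
  exact Finset.sum_congr rfl fun j _ => by ring

noncomputable def kyFanForm (A : Matrix (Fin n) (Fin n) ℂ)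
    (w : WithLp 2 (EuclideanSpace ℂ (Fin n) × EuclideanSpace ℂ (Fin n))) : ℝ :=
  2 * (⟪w.fst, A.toEuclideanLin w.snd⟫_ℂ).re

noncomputable def singPair (A : Matrix (Fin n) (Fin n) ℂ) (j : Fin n) :
    WithLp 2 (EuclideanSpace ℂ (Fin n) × EuclideanSpace ℂ (Fin n)) :=
  toLp 2 ((((√2)⁻¹ : ℝ) : ℂ) • leftSingVec A j,
    (if singVals A j = 0 then 1 else (((√2)⁻¹ : ℝ) : ℂ)) • rightSingVec A j)

lemma orthonormal_singPair (A : Matrix (Fin n) (Fin n) ℂ) : Orthonormal ℂ (singPair A) := by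
  rw [orthonormal_iff_ite]
  intro i j
  simp only [singPair, WithLp.prod_inner_apply, inner_smul_left, inner_smul_right,
    inner_leftSingVec, (rightSingVec A).inner_eq_ite, Complex.conj_ofReal]
  by_cases hij : i = j
  · subst hij
    by_cases h : singVals A i = 0
    · simp [h]
    · simp only [h, if_false, true_and, if_true, ne_eq, not_false_eq_true, mul_one,
        Complex.conj_ofReal, ← Complex.ofReal_mul, TsirelsonInequality.sqrt_two_inv_mul_self]
      norm_num
  · simp [hij]

lemma kyFanForm_singPair (A : Matrix (Fin n) (Fin n) ℂ) (j : Fin n) :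
    kyFanForm A (singPair A j) = singVals A j := by
  by_cases h : singVals A j = 0
  · simp [kyFanForm, singPair, WithLp.fst, WithLp.snd, toEuclideanLin_rightSingVec, h]
  · simp only [kyFanForm, singPair, WithLp.fst, WithLp.snd, WithLp.ofLp_toLp, h, if_false,
      map_smul, toEuclideanLin_rightSingVec, inner_smul_left, inner_smul_right, inner_leftSingVec,
      ne_eq, not_false_eq_true, and_self, if_true, mul_one, Complex.conj_ofReal]
    simp only [Complex.mul_re, Complex.ofReal_re, Complex.ofReal_im, zero_mul, sub_zero, mul_zero]
    linear_combination (2 * singVals A j) * TsirelsonInequality.sqrt_two_inv_mul_self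

lemma kyFanForm_le_sum (A : Matrix (Fin n) (Fin n) ℂ)
    (w : WithLp 2 (EuclideanSpace ℂ (Fin n) × EuclideanSpace ℂ (Fin n))) :
    kyFanForm A w ≤ ∑ j, singVals A j * ‖⟪singPair A j, w⟫_ℂ‖ ^ 2 := by
  rw [kyFanForm, inner_toEuclideanLin_eq_sum, Complex.re_sum, Finset.mul_sum]
  refine Finset.sum_le_sum fun j _ => ?_
  by_cases h : singVals A j = 0
  · simp [h]
  set a := ⟪leftSingVec A j, w.fst⟫_ℂ
  set b := ⟪rightSingVec A j, w.snd⟫_ℂ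
  have hinner : ⟪singPair A j, w⟫_ℂ = (((√2)⁻¹ : ℝ) : ℂ) * (a + b) := by
    simp only [singPair, WithLp.prod_inner_apply, h, if_false, inner_smul_left,
      Complex.conj_ofReal]
    rw [mul_add]
    rfl
  have hnorm : ‖⟪singPair A j, w⟫_ℂ‖ ^ 2 = Complex.normSq (a + b) / 2 := by
    rw [hinner, norm_mul, mul_pow, Complex.norm_real, Real.norm_eq_abs, sq_abs, sq,
      TsirelsonInequality.sqrt_two_inv_mul_self, Complex.sq_norm]
    ring
  -- `4 Re (b * conj a) = |a + b|² - |a - b|²`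
  have hre : 2 * (b * (starRingEnd ℂ) a).re ≤ Complex.normSq (a + b) / 2 := by
    rw [add_comm a b]
    linarith [Complex.normSq_add b a, Complex.normSq_sub b a, Complex.normSq_nonneg (b - a)]
  rw [hnorm, ← inner_conj_symm, Complex.re_ofReal_mul, mul_comm ((starRingEnd ℂ) a)]
  nlinarith [singVals_nonneg A j]

lemma sum_kyFanForm_le_kyFan (A : Matrix (Fin n) (Fin n) ℂ) {ι : Type*}
    {v : ι → WithLp 2 (EuclideanSpace ℂ (Fin n) × EuclideanSpace ℂ (Fin n))}
    (hv : Orthonormal ℂ v) (s : Finset ι) (hs : s.card ≤ n) :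
    ∑ i ∈ s, kyFanForm A (v i) ≤ kyFan A s.card := by
  set d : Fin n → ℝ := fun j => ∑ i ∈ s, ‖⟪singPair A j, v i⟫_ℂ‖ ^ 2
  have hd₁ : ∀ j, d j ≤ 1 := fun j =>
    calc d j = ∑ i ∈ s, ‖⟪v i, singPair A j⟫_ℂ‖ ^ 2 :=
          Finset.sum_congr rfl fun i _ => by rw [norm_inner_symm]
      _ ≤ ‖singPair A j‖ ^ 2 := hv.sum_inner_products_le _
      _ = 1 := by rw [(orthonormal_singPair A).1 j, one_pow]
  have hdk : ∑ j, d j ≤ s.card := by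
    rw [Finset.sum_comm, ← nsmul_one, ← Finset.sum_const]
    exact Finset.sum_le_sum fun i _ => by
      simpa [hv.1 i] using (orthonormal_singPair A).sum_inner_products_le (v i) (s := Finset.univ)
  calc ∑ i ∈ s, kyFanForm A (v i)
      ≤ ∑ i ∈ s, ∑ j, singVals A j * ‖⟪singPair A j, v i⟫_ℂ‖ ^ 2 :=
        Finset.sum_le_sum fun i _ => kyFanForm_le_sum A (v i)
    _ = ∑ j, singVals A j * d j := by
        rw [Finset.sum_comm]
        simp only [d, Finset.mul_sum]
    _ ≤ kyFan A s.card :=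
        sum_mul_le_sumK (singVals_nonneg A) (fun j => by positivity) hd₁ hdk hs

lemma exists_card_eq_kyFan_eq_sum_kyFanForm (A : Matrix (Fin n) (Fin n) ℂ) {k : ℕ} (hk : k ≤ n) :
    ∃ s : Finset (Fin n), s.card = k ∧ kyFan A k = ∑ j ∈ s, kyFanForm A (singPair A j) := by
  obtain ⟨s, hs, h⟩ := exists_card_eq_sumK_eq_sum (singVals A) hk
  exact ⟨s, hs, by simp only [kyFanForm_singPair]; exact h⟩

lemma kyFanForm_add (A B : Matrix (Fin n) (Fin n) ℂ)
    (w : WithLp 2 (EuclideanSpace ℂ (Fin n) × EuclideanSpace ℂ (Fin n))) :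
    kyFanForm (A + B) w = kyFanForm A w + kyFanForm B w := by
  simp only [kyFanForm, map_add, LinearMap.add_apply, inner_add_right, Complex.add_re, mul_add]

lemma kyFanForm_real_smul (r : ℝ) (A : Matrix (Fin n) (Fin n) ℂ)
    (w : WithLp 2 (EuclideanSpace ℂ (Fin n) × EuclideanSpace ℂ (Fin n))) :
    kyFanForm ((r : ℂ) • A) w = r * kyFanForm A w := by
  simp only [kyFanForm, map_smul, LinearMap.smul_apply, inner_smul_right, Complex.re_ofReal_mul]
  ring

lemma kyFanForm_mul_mul (V A W : Matrix (Fin n) (Fin n) ℂ)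
    (w : WithLp 2 (EuclideanSpace ℂ (Fin n) × EuclideanSpace ℂ (Fin n))) :
    kyFanForm (V * A * W) w =
      kyFanForm A (toLp 2 (Vᴴ.toEuclideanLin w.fst, W.toEuclideanLin w.snd)) := by
  simp only [kyFanForm, WithLp.fst, WithLp.snd, Matrix.toLpLin_mul_same,
    LinearMap.comp_apply, Matrix.toEuclideanLin_conjTranspose_eq_adjoint,
    LinearMap.adjoint_inner_left]

lemma Orthonormal.toEuclideanLin_prodMap {ι : Type*} {V W : Matrix (Fin n) (Fin n) ℂ}
    (hV : V ∈ Matrix.unitaryGroup (Fin n) ℂ) (hW : W ∈ Matrix.unitaryGroup (Fin n) ℂ)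
    {v : ι → WithLp 2 (EuclideanSpace ℂ (Fin n) × EuclideanSpace ℂ (Fin n))}
    (hv : Orthonormal ℂ v) :
    Orthonormal ℂ fun i => toLp 2 (V.toEuclideanLin (v i).fst, W.toEuclideanLin (v i).snd) := by
  classical
  rw [orthonormal_iff_ite] at hv ⊢
  intro i j
  rw [← hv i j, WithLp.prod_inner_apply, WithLp.prod_inner_apply]
  exact congrArg₂ (· + ·) (inner_toEuclideanLin_of_mem_unitaryGroup hV _ _)
    (inner_toEuclideanLin_of_mem_unitaryGroup hW _ _)

lemma kyFan_add_le (A B : Matrix (Fin n) (Fin n) ℂ) (k : ℕ) :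
    kyFan (A + B) k ≤ kyFan A k + kyFan B k := by
  rcases le_or_gt k n with hk | hk
  · obtain ⟨s, rfl, hs⟩ := exists_card_eq_kyFan_eq_sum_kyFanForm (A + B) hk
    rw [hs]
    simp only [kyFanForm_add, Finset.sum_add_distrib]
    exact add_le_add (sum_kyFanForm_le_kyFan A (orthonormal_singPair _) s hk)
      (sum_kyFanForm_le_kyFan B (orthonormal_singPair _) s hk)
  · simp [kyFan_of_lt _ hk]

lemma kyFan_real_smul_le {r : ℝ} (hr : 0 ≤ r) (A : Matrix (Fin n) (Fin n) ℂ) (k : ℕ) :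
    kyFan ((r : ℂ) • A) k ≤ r * kyFan A k := by
  rcases le_or_gt k n with hk | hk
  · obtain ⟨s, rfl, hs⟩ := exists_card_eq_kyFan_eq_sum_kyFanForm ((r : ℂ) • A) hk
    rw [hs]
    simp only [kyFanForm_real_smul, ← Finset.mul_sum]
    exact mul_le_mul_of_nonneg_left (sum_kyFanForm_le_kyFan A (orthonormal_singPair _) s hk) hr
  · simp [kyFan_of_lt _ hk]

lemma kyFan_mul_mul_le {V W : Matrix (Fin n) (Fin n) ℂ} (hV : V ∈ Matrix.unitaryGroup (Fin n) ℂ)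
    (hW : W ∈ Matrix.unitaryGroup (Fin n) ℂ) (A : Matrix (Fin n) (Fin n) ℂ) (k : ℕ) :
    kyFan (V * A * W) k ≤ kyFan A k := by
  rcases le_or_gt k n with hk | hk
  · obtain ⟨s, rfl, hs⟩ := exists_card_eq_kyFan_eq_sum_kyFanForm (V * A * W) hk
    rw [hs]
    simp only [kyFanForm_mul_mul]
    exact sum_kyFanForm_le_kyFan A
      ((orthonormal_singPair _).toEuclideanLin_prodMap (Unitary.star_mem hV) hW) s hk
  · simp [kyFan_of_lt _ hk]

lemma kyFan_half_smul_add_mul_mul_le {V W : Matrix (Fin n) (Fin n) ℂ}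
    (hV : V ∈ Matrix.unitaryGroup (Fin n) ℂ) (hW : W ∈ Matrix.unitaryGroup (Fin n) ℂ)
    (A : Matrix (Fin n) (Fin n) ℂ) (k : ℕ) :
    kyFan ((1 / 2 : ℂ) • (A + V * A * W)) k ≤ kyFan A k := by
  have h := kyFan_real_smul_le (r := 1 / 2) (by norm_num) (A + V * A * W) k
  push_cast at h
  linarith [kyFan_add_le A (V * A * W) k, kyFan_mul_mul_le hV hW A k]

end KyFan

/-- Pinching and anti-pinching decrease discrepancy values in weak majorization. -/
theorem discVals_pinching (n : ℕ) (A U : Matrix (Fin n) (Fin n) ℂ)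
    (hU : U ∈ Matrix.unitaryGroup (Fin n) ℂ) :
    WeakMaj (discVals (((1 : ℂ)/2) • (A + U * A * Uᴴ))) (discVals A)
    ∧ WeakMaj (discVals (((1 : ℂ)/2) • (A - U * A * Uᴴ))) (discVals A) := by
  have hUstar : Uᴴ ∈ Matrix.unitaryGroup (Fin n) ℂ := Unitary.star_mem hU
  have hnegU : -U ∈ Matrix.unitaryGroup (Fin n) ℂ := by
    rw [Matrix.mem_unitaryGroup_iff, star_neg, neg_mul_neg]
    exact Matrix.mem_unitaryGroup_iff.1 hU
  have hconj (α : ℂ) : U * (A - α • 1) * Uᴴ = U * A * Uᴴ - α • 1 := by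
    rw [Matrix.mul_sub, Matrix.sub_mul, Matrix.mul_smul, Matrix.mul_one, Matrix.smul_mul,
      ← Matrix.star_eq_conjTranspose, Matrix.mem_unitaryGroup_iff.1 hU]
  constructor
  · refine weakMaj_discVals_of_discNorm_le fun k =>
      discNorm_le_of_forall_exists_kyFan_le fun α => ⟨α, ?_⟩
    have h : (1 / 2 : ℂ) • (A + U * A * Uᴴ) - α • 1 =
        (1 / 2 : ℂ) • ((A - α • 1) + U * (A - α • 1) * Uᴴ) := by
      rw [hconj]
      module
    exact h ▸ kyFan_half_smul_add_mul_mul_le hU hUstar _ k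
  · refine weakMaj_discVals_of_discNorm_le fun k =>
      discNorm_le_of_forall_exists_kyFan_le fun α => ⟨0, ?_⟩
    have h : (1 / 2 : ℂ) • (A - U * A * Uᴴ) - (0 : ℂ) • 1 =
        (1 / 2 : ℂ) • ((A - α • 1) + -U * (A - α • 1) * Uᴴ) := by
      rw [neg_mul, neg_mul, hconj]
      module
    exact h ▸ kyFan_half_smul_add_mul_mul_le hnegU hUstar _ k
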